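/- For all real numbers v and w, (1/4)(|v| + |w|) ≤ ∫₀¹ |w + s(v - w)| ds ≤ (1/2)(|v| + |w|). -/

import Mathlib

/-!
The upper bound is the convexity of `|·|`: pointwise `|w + s (v - w)| ≤ (1 - s)|w| + s|v|`,
which integrates to `(|v| + |w|)/2`. For the lower bound, split `[0,1]` at `1/2` and bound the
integral of `|f|` on each half below by `|∫ f|`; for the affine `f` these are `|v + 3w|/8` and
`|3v + w|/8`, and `|v + 3w| + |3v + w| ≥ max (4|v + w|) (2|v - w|) ≥ 2(|v| + |w|)`.
-/

open intervalIntegral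

lemma integral_const_add_mul (c d a b : ℝ) :
    ∫ s in a..b, (c + s * d) = c * (b - a) + d * (b ^ 2 - a ^ 2) / 2 := by
  rw [integral_add intervalIntegrable_const (Continuous.intervalIntegrable (by fun_prop) _ _),
    integral_mul_const, integral_id, integral_const, smul_eq_mul]
  ring

lemma abs_add_mul_sub_le {v w s : ℝ} (hs₀ : 0 ≤ s) (hs₁ : s ≤ 1) :
    |w + s * (v - w)| ≤ (1 - s) * |w| + s * |v| :=
  calc |w + s * (v - w)| = |(1 - s) * w + s * v| := by ring_nf
    _ ≤ |(1 - s) * w| + |s * v| := abs_add_le _ _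
    _ = (1 - s) * |w| + s * |v| := by
      rw [abs_mul, abs_mul, abs_of_nonneg (sub_nonneg.2 hs₁), abs_of_nonneg hs₀]

lemma integral_abs_add_mul_sub_le (v w : ℝ) :
    ∫ s in (0 : ℝ)..1, |w + s * (v - w)| ≤ (|v| + |w|) / 2 :=
  calc ∫ s in (0 : ℝ)..1, |w + s * (v - w)|
      ≤ ∫ s in (0 : ℝ)..1, (|w| + s * (|v| - |w|)) := by
        refine integral_mono_on zero_le_one (Continuous.intervalIntegrable (by fun_prop) _ _)
          (Continuous.intervalIntegrable (by fun_prop) _ _) fun s hs => ?_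
        linarith [abs_add_mul_sub_le (v := v) (w := w) hs.1 hs.2]
    _ = (|v| + |w|) / 2 := by rw [integral_const_add_mul]; ring

lemma abs_integral_add_mul_sub_le {a b : ℝ} (v w : ℝ) (hab : a ≤ b) :
    |w * (b - a) + (v - w) * (b ^ 2 - a ^ 2) / 2| ≤ ∫ s in a..b, |w + s * (v - w)| := by
  rw [← integral_const_add_mul]
  exact abs_integral_le_integral_abs hab

lemma abs_add_abs_div_four_le (v w : ℝ) :
    (|v| + |w|) / 4 ≤ |(v + 3 * w) / 8| + |(3 * v + w) / 8| := by
  rcases abs_cases v with ⟨hv, _⟩ | ⟨hv, _⟩ <;> rcases abs_cases w with ⟨hw, _⟩ | ⟨hw, _⟩ <;>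
    rcases abs_cases ((v + 3 * w) / 8) with ⟨h₁, _⟩ | ⟨h₁, _⟩ <;>
    rcases abs_cases ((3 * v + w) / 8) with ⟨h₂, _⟩ | ⟨h₂, _⟩ <;> linarith

lemma le_integral_abs_add_mul_sub (v w : ℝ) :
    (|v| + |w|) / 4 ≤ ∫ s in (0 : ℝ)..1, |w + s * (v - w)| := by
  have h₁ : |(v + 3 * w) / 8| ≤ ∫ s in (0 : ℝ)..1 / 2, |w + s * (v - w)| := by
    convert abs_integral_add_mul_sub_le v w (by norm_num : (0 : ℝ) ≤ 1 / 2) using 2; ring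
  have h₂ : |(3 * v + w) / 8| ≤ ∫ s in (1 / 2 : ℝ)..1, |w + s * (v - w)| := by
    convert abs_integral_add_mul_sub_le v w (by norm_num : (1 / 2 : ℝ) ≤ 1) using 2; ring
  rw [← integral_add_adjacent_intervals (b := 1 / 2)
    (Continuous.intervalIntegrable (by fun_prop) _ _)
    (Continuous.intervalIntegrable (by fun_prop) _ _)]
  linarith [abs_add_abs_div_four_le v w]

theorem integral_abs_segment_bounds (v w : ℝ) :
    (1/4) * (|v| + |w|) ≤ (∫ s in (0:ℝ)..1, |w + s * (v - w)|) ∧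
    (∫ s in (0:ℝ)..1, |w + s * (v - w)|) ≤ (1/2) * (|v| + |w|) := by
  exact ⟨by linarith [le_integral_abs_add_mul_sub v w],
    by linarith [integral_abs_add_mul_sub_le v w]⟩
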